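/- Let 1<p<∞. The exponent 1/(p-1) in the bound ‖M⁺‖_{L^p_w} ≤ c‖w‖_{A_p^+}^{1/(p-1)} is sharp in the following concrete sense: there are positive constants c₁, c₂, c₃ (depending only on p) such that for every ε ∈ (0,1), the weight w(x) = |1-x|^{(1-ε)(p-1)} satisfies c₁/ε ≤ ‖w‖_{A_p^+(ℝ)}^{1/(p-1)} ≤ c₂/ε, the function f(t) = (1-t)^{ε(p-1)-1}·χ_{(0,1)}(t) belongs to L^p_w(ℝ), and ‖M⁺f‖_{L^p_w(ℝ)} ≥ (c₃/ε) ‖f‖_{L^p_w(ℝ)}. -/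

import Mathlib

open MeasureTheory Set Filter
open scoped ENNReal

noncomputable section

/-- `∫_a^b w` as a lower integral. -/
def lintIoc (w : ℝ → ℝ) (a b : ℝ) : ℝ≥0∞ :=
  ∫⁻ t in Set.Ioc a b, ENNReal.ofReal (w t)

/-- Average `(1/(b-a)) ∫_a^b w`. -/
def avgIoc (w : ℝ → ℝ) (a b : ℝ) : ℝ≥0∞ :=
  (ENNReal.ofReal (b - a))⁻¹ * lintIoc w a b

/-- The one-sided Muckenhoupt `A_p^+` characteristic:
`sup_{x, h>0} ((1/h)∫_{x-h}^x w) ((1/h)∫_x^{x+h} w^{1-p'})^{p-1}` with `p' = p/(p-1)`. -/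
def apPlusChar (p : ℝ) (w : ℝ → ℝ) : ℝ≥0∞ :=
  ⨆ (x : ℝ) (h : ℝ) (_ : 0 < h),
    avgIoc w (x - h) x *
      avgIoc (fun t => w t ^ (1 - p / (p - 1))) x (x + h) ^ (p - 1)

/-- Weighted `L^p` "norm" `(∫ g^p w)^{1/p}` of an `ℝ≥0∞`-valued function. -/
def lnormW (p : ℝ) (w : ℝ → ℝ) (g : ℝ → ℝ≥0∞) : ℝ≥0∞ :=
  (∫⁻ x : ℝ, g x ^ p * ENNReal.ofReal (w x)) ^ (1 / p)

/-- One-sided (right) Hardy–Littlewood maximal operator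
`M⁺f(x) = sup_{h>0} (1/h) ∫_x^{x+h} |f|`. -/
def Mplus (f : ℝ → ℝ) (x : ℝ) : ℝ≥0∞ :=
  ⨆ (h : ℝ) (_ : 0 < h),
    (ENNReal.ofReal h)⁻¹ * ∫⁻ t in Set.Ioc x (x + h), ENNReal.ofReal |f t|

/-!
For `w(x) = |1 - x|^{(1-ε)(p-1)}` the dual weight `w^{1-p'}` is `|1 - x|^{ε-1}`, whose integral
over an interval of length `h` is at most `2 h^ε / ε` (subadditivity of `t ↦ t^ε`). Testing the
`A_p^+` condition at `x = 1`, `h = 1` gives `‖w‖_{A_p^+} ≥ (1/p) ε^{1-p}`. Conversely, intervals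
with `|1 - x| ≤ 2h` are controlled by that integral bound, and on the others both weights are
comparable to their values at `x`, so `‖w‖_{A_p^+} ≤ (6/ε)^{p-1}`. Finally, averaging `f` over
`(x, 1]` gives `M⁺f(x) ≥ f(x) / (ε(p-1))` pointwise.
-/

lemma lintIoc_abs_sub_rpow_of_le {a b c r : ℝ} (hab : a ≤ b) (hbc : b ≤ c) (hr : -1 < r) :
    lintIoc (fun t => |c - t| ^ r) a b =
      ENNReal.ofReal (((c - a) ^ (r + 1) - (c - b) ^ (r + 1)) / (r + 1)) := by
  have hpos : ∀ t ∈ Ioc a b, 0 ≤ c - t := fun t ht => by linarith [ht.2]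
  have hint : IntervalIntegrable (fun t => (c - t) ^ r) volume a b := by
    simpa using ((intervalIntegral.intervalIntegrable_rpow' hr (a := c - b)
      (b := c - a)).comp_sub_left c).symm
  rw [lintIoc, setLIntegral_congr_fun measurableSet_Ioc
      fun t ht => by rw [abs_of_nonneg (hpos t ht)],
    ← ofReal_integral_eq_lintegral_ofReal hint.1
      (ae_restrict_of_forall_mem measurableSet_Ioc fun t ht => Real.rpow_nonneg (hpos t ht) r),
    ← intervalIntegral.integral_of_le hab,
    intervalIntegral.integral_comp_sub_left (fun s => s ^ r) c, integral_rpow (Or.inl hr)]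

lemma lintIoc_abs_sub_rpow_of_ge {a b c r : ℝ} (hca : c ≤ a) (hab : a ≤ b) (hr : -1 < r) :
    lintIoc (fun t => |c - t| ^ r) a b =
      ENNReal.ofReal (((b - c) ^ (r + 1) - (a - c) ^ (r + 1)) / (r + 1)) := by
  have hpos : ∀ t ∈ Ioc a b, 0 ≤ t - c := fun t ht => by linarith [ht.1]
  have hint : IntervalIntegrable (fun t => (t - c) ^ r) volume a b := by
    simpa using (intervalIntegral.intervalIntegrable_rpow' hr (a := a - c)
      (b := b - c)).comp_sub_right c
  rw [lintIoc, setLIntegral_congr_fun measurableSet_Ioc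
      fun t ht => by rw [abs_sub_comm, abs_of_nonneg (hpos t ht)],
    ← ofReal_integral_eq_lintegral_ofReal hint.1
      (ae_restrict_of_forall_mem measurableSet_Ioc fun t ht => Real.rpow_nonneg (hpos t ht) r),
    ← intervalIntegral.integral_of_le hab,
    intervalIntegral.integral_comp_sub_right (fun s => s ^ r) c, integral_rpow (Or.inl hr)]

section Subadditive

variable {a b c s : ℝ} (hs : 0 < s) (hs1 : s ≤ 1)
include hs hs1

lemma lintIoc_abs_sub_rpow_le_of_le (hab : a ≤ b) (hbc : b ≤ c) :
    lintIoc (fun t => |c - t| ^ (s - 1)) a b ≤ ENNReal.ofReal ((b - a) ^ s / s) := by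
  rw [lintIoc_abs_sub_rpow_of_le hab hbc (by linarith), sub_add_cancel]
  have := Real.rpow_add_le_add_rpow (sub_nonneg.2 hbc) (sub_nonneg.2 hab) hs.le hs1
  rw [sub_add_sub_cancel] at this
  gcongr
  linarith

lemma lintIoc_abs_sub_rpow_le_of_ge (hca : c ≤ a) (hab : a ≤ b) :
    lintIoc (fun t => |c - t| ^ (s - 1)) a b ≤ ENNReal.ofReal ((b - a) ^ s / s) := by
  rw [lintIoc_abs_sub_rpow_of_ge hca hab (by linarith), sub_add_cancel]
  have := Real.rpow_add_le_add_rpow (sub_nonneg.2 hca) (sub_nonneg.2 hab) hs.le hs1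
  rw [sub_add_sub_cancel'] at this
  gcongr
  linarith

end Subadditive

lemma lintIoc_add {w : ℝ → ℝ} {a b c : ℝ} (hab : a ≤ b) (hbc : b ≤ c) :
    lintIoc w a c = lintIoc w a b + lintIoc w b c := by
  rw [lintIoc, ← Ioc_union_Ioc_eq_Ioc hab hbc,
    lintegral_union measurableSet_Ioc (Ioc_disjoint_Ioc_of_le le_rfl), lintIoc, lintIoc]

lemma lintIoc_abs_sub_rpow_le {c x h s : ℝ} (hh : 0 < h) (hs : 0 < s) (hs1 : s ≤ 1) :
    lintIoc (fun t => |c - t| ^ (s - 1)) x (x + h) ≤ ENNReal.ofReal (2 * (h ^ s / s)) := by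
  have hmono : ∀ u, 0 ≤ u → u ≤ h → ENNReal.ofReal (u ^ s / s) ≤ ENNReal.ofReal (h ^ s / s) :=
    fun u hu huh => by gcongr
  have hhalf : ENNReal.ofReal (h ^ s / s) ≤ ENNReal.ofReal (2 * (h ^ s / s)) := by
    gcongr
    linarith [show 0 ≤ h ^ s / s by positivity]
  rcases le_total (x + h) c with hc | hc
  · refine (lintIoc_abs_sub_rpow_le_of_le hs hs1 (by linarith) hc).trans ?_
    rwa [add_sub_cancel_left]
  rcases le_total c x with hc' | hc'
  · refine (lintIoc_abs_sub_rpow_le_of_ge hs hs1 hc' (by linarith)).trans ?_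
    rwa [add_sub_cancel_left]
  rw [lintIoc_add hc' hc, two_mul, ENNReal.ofReal_add (by positivity) (by positivity)]
  gcongr
  · exact (lintIoc_abs_sub_rpow_le_of_le hs hs1 hc' le_rfl).trans
      (hmono _ (by linarith) (by linarith))
  · exact (lintIoc_abs_sub_rpow_le_of_ge hs hs1 le_rfl hc).trans
      (hmono _ (by linarith) (by linarith))

lemma avgIoc_le_of_lintIoc_le {w : ℝ → ℝ} {a b K : ℝ} (hab : a < b)
    (hw : lintIoc w a b ≤ ENNReal.ofReal ((b - a) * K)) : avgIoc w a b ≤ ENNReal.ofReal K := by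
  rw [ENNReal.ofReal_mul (sub_nonneg.2 hab.le)] at hw
  calc avgIoc w a b ≤ (ENNReal.ofReal (b - a))⁻¹ * (ENNReal.ofReal (b - a) * ENNReal.ofReal K) :=
        by rw [avgIoc]; gcongr
    _ = ENNReal.ofReal K :=
        ENNReal.inv_mul_cancel_left (by simpa using hab) ENNReal.ofReal_ne_top

lemma avgIoc_le_of_forall_le {w : ℝ → ℝ} {a b K : ℝ} (hab : a < b)
    (hw : ∀ t ∈ Ioc a b, w t ≤ K) : avgIoc w a b ≤ ENNReal.ofReal K := by
  refine avgIoc_le_of_lintIoc_le hab ?_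
  calc lintIoc w a b ≤ ∫⁻ _ in Ioc a b, ENNReal.ofReal K :=
        setLIntegral_mono measurable_const fun t ht => ENNReal.ofReal_le_ofReal (hw t ht)
    _ = ENNReal.ofReal ((b - a) * K) := by
        rw [setLIntegral_const, Real.volume_Ioc, mul_comm,
          ENNReal.ofReal_mul (sub_nonneg.2 hab.le)]

lemma avgIoc_mul_rpow_le {p : ℝ} (hq : 0 ≤ p - 1) {w σ : ℝ → ℝ} {a b a' b' A B K : ℝ}
    (hA : 0 ≤ A) (hB : 0 ≤ B) (hw : avgIoc w a b ≤ ENNReal.ofReal A)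
    (hσ : avgIoc σ a' b' ≤ ENNReal.ofReal B) (hK : A * B ^ (p - 1) ≤ K) :
    avgIoc w a b * avgIoc σ a' b' ^ (p - 1) ≤ ENNReal.ofReal K :=
  calc avgIoc w a b * avgIoc σ a' b' ^ (p - 1)
      ≤ ENNReal.ofReal A * ENNReal.ofReal B ^ (p - 1) := by gcongr
    _ = ENNReal.ofReal (A * B ^ (p - 1)) := by
        rw [ENNReal.ofReal_rpow_of_nonneg hB hq, ← ENNReal.ofReal_mul hA]
    _ ≤ ENNReal.ofReal K := ENNReal.ofReal_le_ofReal hK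

section PowerWeight

variable {c x h : ℝ} (hh : 0 < h)
include hh

lemma avgIoc_abs_sub_rpow_le_of_nonneg {a : ℝ} (ha : 0 ≤ a) :
    avgIoc (fun t => |c - t| ^ a) (x - h) x ≤ ENNReal.ofReal ((|c - x| + h) ^ a) :=
  avgIoc_le_of_forall_le (by linarith) fun t ht => by
    have : |x - t| ≤ h := abs_le.2 ⟨by linarith [ht.2], by linarith [ht.1]⟩
    gcongr
    linarith [abs_sub_le c x t]

lemma avgIoc_abs_sub_rpow_le {s : ℝ} (hs : 0 < s) (hs1 : s ≤ 1) :
    avgIoc (fun t => |c - t| ^ (s - 1)) x (x + h) ≤ ENNReal.ofReal (2 / s * h ^ (s - 1)) := by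
  refine avgIoc_le_of_lintIoc_le (by linarith)
    ((lintIoc_abs_sub_rpow_le hh hs hs1).trans_eq (congrArg ENNReal.ofReal ?_))
  rw [add_sub_cancel_left, Real.rpow_sub_one hh.ne']
  field_simp

lemma avgIoc_abs_sub_rpow_le_of_lt {s : ℝ} (hs1 : s ≤ 1) (hhx : h < |c - x|) :
    avgIoc (fun t => |c - t| ^ (s - 1)) x (x + h) ≤ ENNReal.ofReal ((|c - x| - h) ^ (s - 1)) :=
  avgIoc_le_of_forall_le (by linarith) fun t ht => by
    have : |t - x| ≤ h := abs_le.2 ⟨by linarith [ht.1], by linarith [ht.2]⟩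
    refine Real.rpow_le_rpow_of_nonpos (by linarith) ?_ (by linarith)
    linarith [abs_sub_le c t x]

end PowerWeight

lemma abs_sub_rpow_dualWeight {p : ℝ} (hp : 1 < p) (c ε : ℝ) :
    (fun t => (|c - t| ^ ((1 - ε) * (p - 1))) ^ (1 - p / (p - 1))) =
      fun t => |c - t| ^ (ε - 1) := by
  have hq : p - 1 ≠ 0 := by linarith
  funext t
  rw [← Real.rpow_mul (abs_nonneg _)]
  congr 1
  field_simp
  ring

section Characteristic

variable {p c ε : ℝ} (hp : 1 < p) (hε : 0 < ε) (hε1 : ε ≤ 1)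
include hp hε hε1

lemma ofReal_mul_rpow_le_apPlusChar_abs_sub_rpow :
    ENNReal.ofReal (1 / p) * ENNReal.ofReal (1 / ε) ^ (p - 1) ≤
      apPlusChar p (fun x => |c - x| ^ ((1 - ε) * (p - 1))) := by
  have hα : 0 ≤ (1 - ε) * (p - 1) := mul_nonneg (by linarith) (by linarith)
  have hw : avgIoc (fun x => |c - x| ^ ((1 - ε) * (p - 1))) (c - 1) c =
      ENNReal.ofReal (1 / ((1 - ε) * (p - 1) + 1)) := by
    rw [avgIoc, lintIoc_abs_sub_rpow_of_le (by linarith) le_rfl (by linarith)]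
    simp [Real.zero_rpow (by linarith : (1 - ε) * (p - 1) + 1 ≠ 0)]
  have hσ : avgIoc (fun x => |c - x| ^ (ε - 1)) c (c + 1) = ENNReal.ofReal (1 / ε) := by
    rw [avgIoc, lintIoc_abs_sub_rpow_of_ge le_rfl (by linarith) (by linarith)]
    simp [Real.zero_rpow hε.ne']
  calc ENNReal.ofReal (1 / p) * ENNReal.ofReal (1 / ε) ^ (p - 1)
      ≤ ENNReal.ofReal (1 / ((1 - ε) * (p - 1) + 1)) * ENNReal.ofReal (1 / ε) ^ (p - 1) := by
        gcongr
        nlinarith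
    _ ≤ apPlusChar p (fun x => |c - x| ^ ((1 - ε) * (p - 1))) := by
        rw [← hw, ← hσ, ← abs_sub_rpow_dualWeight hp]
        exact le_iSup_of_le c (le_iSup₂_of_le 1 one_pos le_rfl)

lemma apPlusChar_abs_sub_rpow_le :
    apPlusChar p (fun x => |c - x| ^ ((1 - ε) * (p - 1))) ≤ ENNReal.ofReal (6 / ε) ^ (p - 1) := by
  have hq : 0 ≤ p - 1 := by linarith
  rw [ENNReal.ofReal_rpow_of_nonneg (by positivity) hq]
  refine iSup_le fun x => iSup₂_le fun h hh => ?_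
  beta_reduce
  rw [abs_sub_rpow_dualWeight hp]
  set α := (1 - ε) * (p - 1) with hα_def
  have hα : 0 ≤ α := mul_nonneg (by linarith) (by linarith)
  have hdual : ∀ u : ℝ, 0 < u → (u ^ (ε - 1)) ^ (p - 1) = (u ^ α)⁻¹ := fun u hu => by
    rw [← Real.rpow_mul hu.le, ← Real.rpow_neg hu.le, hα_def]
    ring_nf
  have h3α : (3 : ℝ) ^ α * (2 / ε) ^ (p - 1) ≤ (6 / ε) ^ (p - 1) := by
    calc (3 : ℝ) ^ α * (2 / ε) ^ (p - 1) ≤ 3 ^ (p - 1) * (2 / ε) ^ (p - 1) := by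
          gcongr
          · norm_num
          · nlinarith
      _ = (6 / ε) ^ (p - 1) := by
          rw [← Real.mul_rpow (by norm_num) (by positivity)]
          ring_nf
  by_cases hnear : |c - x| ≤ 2 * h
  · refine avgIoc_mul_rpow_le (A := (3 * h) ^ α) hq (by positivity) (by positivity)
      ((avgIoc_abs_sub_rpow_le_of_nonneg hh hα).trans (by gcongr; linarith))
      (avgIoc_abs_sub_rpow_le hh hε hε1) (le_of_eq_of_le ?_ h3α)
    have : h ^ α ≠ 0 := by positivity
    rw [Real.mul_rpow (by norm_num) hh.le, Real.mul_rpow (by positivity) (by positivity),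
      hdual h hh]
    field_simp
  · rw [not_le] at hnear
    have hd : 0 < |c - x| - h := by linarith
    refine avgIoc_mul_rpow_le hq (by positivity) (by positivity)
      (avgIoc_abs_sub_rpow_le_of_nonneg hh hα)
      (avgIoc_abs_sub_rpow_le_of_lt hh hε1 (by linarith)) (le_trans ?_ h3α)
    rw [hdual _ hd, ← div_eq_mul_inv, ← Real.div_rpow (by positivity) hd.le]
    calc ((|c - x| + h) / (|c - x| - h)) ^ α ≤ 3 ^ α := by
          gcongr
          rw [div_le_iff₀ hd]
          linarith
      _ ≤ 3 ^ α * (2 / ε) ^ (p - 1) :=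
          le_mul_of_one_le_right (by positivity)
            (Real.one_le_rpow (by rw [le_div_iff₀ hε]; linarith) hq)

end Characteristic

section WeightedNorm

variable {p : ℝ} (hp : 0 < p) (w : ℝ → ℝ)
include hp

lemma lnormW_const_mul {c : ℝ≥0∞} (hc : c ≠ ∞) (g : ℝ → ℝ≥0∞) :
    lnormW p w (fun x => c * g x) = c * lnormW p w g := by
  simp_rw [lnormW, ENNReal.mul_rpow_of_nonneg _ _ hp.le, mul_assoc]
  rw [lintegral_const_mul' _ _ (ENNReal.rpow_ne_top_of_nonneg hp.le hc),
    ENNReal.mul_rpow_of_nonneg _ _ (by positivity), ← ENNReal.rpow_mul, mul_one_div_cancel hp.ne',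
    ENNReal.rpow_one]

lemma lnormW_mono {g g' : ℝ → ℝ≥0∞} (h : g ≤ g') : lnormW p w g ≤ lnormW p w g' := by
  unfold lnormW
  gcongr with x
  exact h x

end WeightedNorm

lemma lnormW_abs_sub_rpow_indicator_ne_top {p a r : ℝ} (hp : 0 < p) (hr : -1 < r * p + a) :
    lnormW p (fun x => |1 - x| ^ a)
      (fun x => ENNReal.ofReal |if x ∈ Ioo (0 : ℝ) 1 then (1 - x) ^ r else 0|) ≠ ∞ := by
  have hind : (fun x : ℝ => ENNReal.ofReal |if x ∈ Ioo (0 : ℝ) 1 then (1 - x) ^ r else 0| ^ p *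
      ENNReal.ofReal (|1 - x| ^ a)) =
        (Ioo (0 : ℝ) 1).indicator (fun x => ENNReal.ofReal (|1 - x| ^ (r * p + a))) := by
    funext x
    by_cases hx : x ∈ Ioo (0 : ℝ) 1
    · have h1x : 0 < 1 - x := by linarith [hx.2]
      rw [indicator_of_mem hx, if_pos hx, abs_of_pos h1x,
        abs_of_nonneg (Real.rpow_nonneg h1x.le _),
        ENNReal.ofReal_rpow_of_nonneg (Real.rpow_nonneg h1x.le _) hp.le, ← Real.rpow_mul h1x.le,
        ← ENNReal.ofReal_mul (Real.rpow_nonneg h1x.le _), ← Real.rpow_add h1x]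
    · rw [indicator_of_notMem hx, if_neg hx, abs_zero, ENNReal.ofReal_zero,
        ENNReal.zero_rpow_of_pos hp, zero_mul]
  rw [lnormW, hind, lintegral_indicator measurableSet_Ioo, setLIntegral_congr Ioo_ae_eq_Ioc,
    ← lintIoc, lintIoc_abs_sub_rpow_of_le zero_le_one le_rfl hr]
  exact ENNReal.rpow_ne_top_of_nonneg (by positivity) ENNReal.ofReal_ne_top

lemma ofReal_mul_le_Mplus_rpow_indicator {r : ℝ} (hr : -1 < r) (x : ℝ) :
    ENNReal.ofReal (1 / (r + 1)) * ENNReal.ofReal |if x ∈ Ioo (0 : ℝ) 1 then (1 - x) ^ r else 0| ≤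
      Mplus (fun t => if t ∈ Ioo (0 : ℝ) 1 then (1 - t) ^ r else 0) x := by
  by_cases hx : x ∈ Ioo (0 : ℝ) 1
  swap
  · simp [hx]
  have h1x : 0 < 1 - x := by linarith [hx.2]
  have hint : ∫⁻ t in Ioc x (x + (1 - x)),
      ENNReal.ofReal |if t ∈ Ioo (0 : ℝ) 1 then (1 - t) ^ r else 0|
        = ENNReal.ofReal (1 - x) * ENNReal.ofReal (1 / (r + 1) * (1 - x) ^ r) := by
    rw [add_sub_cancel, ← setLIntegral_congr Ioo_ae_eq_Ioc,
      setLIntegral_congr_fun measurableSet_Ioo fun t ht => by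
        rw [if_pos ⟨hx.1.trans ht.1, ht.2⟩, ← abs_of_pos (sub_pos.2 ht.2),
          abs_of_nonneg (Real.rpow_nonneg (abs_nonneg _) _)],
      setLIntegral_congr Ioo_ae_eq_Ioc, ← lintIoc, lintIoc_abs_sub_rpow_of_le hx.2.le le_rfl hr,
      ← ENNReal.ofReal_mul h1x.le, sub_self, Real.zero_rpow (by linarith), sub_zero,
      Real.rpow_add_one h1x.ne']
    ring_nf
  rw [if_pos hx, abs_of_nonneg (Real.rpow_nonneg h1x.le _),
    ← ENNReal.ofReal_mul (one_div_nonneg.2 (by linarith))]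
  refine le_iSup₂_of_le (1 - x) h1x ?_
  rw [hint, ENNReal.inv_mul_cancel_left (by simpa using h1x) ENNReal.ofReal_ne_top]

/-- Sharpness of the exponent `1/(p-1)` in Buckley's bound for `M⁺`: for the weight
`w(x) = |1-x|^{(1-ε)(p-1)}` one has `‖w‖_{A_p^+}^{1/(p-1)} ≍ 1/ε`, the function
`f(t) = (1-t)^{ε(p-1)-1} χ_{(0,1)}(t)` lies in `L^p_w`, and
`‖M⁺f‖_{L^p_w} ≥ (c₃/ε) ‖f‖_{L^p_w}`. -/
theorem stmt2 (p : ℝ) (hp : 1 < p) :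
    ∃ c₁ c₂ c₃ : ℝ, 0 < c₁ ∧ 0 < c₂ ∧ 0 < c₃ ∧
      ∀ ε : ℝ, ε ∈ Set.Ioo (0 : ℝ) 1 →
        let w : ℝ → ℝ := fun x => |1 - x| ^ ((1 - ε) * (p - 1))
        let f : ℝ → ℝ := fun t =>
          if t ∈ Set.Ioo (0 : ℝ) 1 then (1 - t) ^ (ε * (p - 1) - 1) else 0
        ENNReal.ofReal (c₁ / ε) ≤ apPlusChar p w ^ (1 / (p - 1)) ∧
        apPlusChar p w ^ (1 / (p - 1)) ≤ ENNReal.ofReal (c₂ / ε) ∧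
        lnormW p w (fun x => ENNReal.ofReal |f x|) ≠ ∞ ∧
        ENNReal.ofReal (c₃ / ε) * lnormW p w (fun x => ENNReal.ofReal |f x|) ≤
          lnormW p w (Mplus f) := by
  have hq : 0 < p - 1 := by linarith
  refine ⟨(1 / p) ^ (1 / (p - 1)), 6, 1 / (p - 1), by positivity, by norm_num, by positivity, ?_⟩
  rintro ε ⟨hε, hε1⟩ w f
  have hr : -1 < ε * (p - 1) - 1 := by nlinarith
  refine ⟨?_, ?_, lnormW_abs_sub_rpow_indicator_ne_top (by linarith) (by nlinarith), ?_⟩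
  · rw [one_div (p - 1), ENNReal.le_rpow_inv_iff hq, div_eq_mul_one_div _ ε,
      ENNReal.ofReal_mul (by positivity), ENNReal.mul_rpow_of_nonneg _ _ hq.le,
      ENNReal.ofReal_rpow_of_nonneg (by positivity) hq.le,
      Real.rpow_inv_rpow (by positivity) hq.ne']
    exact ofReal_mul_rpow_le_apPlusChar_abs_sub_rpow hp hε hε1.le
  · rw [one_div (p - 1), ENNReal.rpow_inv_le_iff hq]
    exact apPlusChar_abs_sub_rpow_le hp hε hε1.le
  · calc ENNReal.ofReal (1 / (p - 1) / ε) * lnormW p w (fun x => ENNReal.ofReal |f x|)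
        = lnormW p w (fun x => ENNReal.ofReal (1 / (ε * (p - 1) - 1 + 1)) *
            ENNReal.ofReal |f x|) := by
          rw [lnormW_const_mul (by linarith) w ENNReal.ofReal_ne_top, sub_add_cancel, div_div,
            mul_comm ε]
      _ ≤ lnormW p w (Mplus f) :=
          lnormW_mono (by linarith) w (ofReal_mul_le_Mplus_rpow_indicator hr)

end
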